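/- Let 3 ≤ d₁ ≤ d₂. Represent vectors in ℂ^{d₁} ⊗ ℂ^{d₂} as d₁×d₂ complex matrices, with the first-party action (E ⊗ I) sending Φ to EΦ for E a d₁×d₁ matrix. Let S be the set consisting of the matrices of |00⟩ − |12⟩, of |i0⟩ − |0i⟩ for 1 ≤ i ≤ d₁−1, of |0j⟩ − |2,(j−1)⟩ for d₁ ≤ j ≤ d₂−1, and the all-ones d₁×d₂ matrix. If a d₁×d₁ complex matrix E satisfies tr(Ψᴴ E Φ) = 0 for all distinct Ψ, Φ ∈ S, then E = c·I for some c ∈ ℂ. -/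

import Mathlib

open Matrix

/-! With `ψ₀ = |00⟩ − |12⟩` and `ψᵢ = |i0⟩ − |0i⟩` for `0 < i < d₁`, the amplitude
`⟨ψᵢ|E ⊗ I|ψₖ⟩` is `E i k` for distinct nonzero `i, k`, while `⟨ψ₀|E ⊗ I|ψₖ⟩ = E 0 k + [k = 2] E 1 0`
and `⟨ψₖ|E ⊗ I|ψ₀⟩ = E k 0 + [k = 2] E 0 1`. Taking `k = 1` first kills `E 0 1` and `E 1 0`, and then
every off-diagonal entry of `E` vanishes. For diagonal `E` the all-ones state gives
`⟨J|E ⊗ I|ψₖ⟩ = E k k − E 0 0`, so the diagonal is constant. -/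

/-- Coefficient matrix of the basis vector `|i⟩⊗|j⟩` in `ℂ^{d₁} ⊗ ℂ^{d₂}`. -/
noncomputable def ket (d₁ d₂ : ℕ) (i j : ℕ) : Matrix (Fin d₁) (Fin d₂) ℂ :=
  fun a b => if (a : ℕ) = i ∧ (b : ℕ) = j then 1 else 0

/-- The `d₂+1` states of Theorem 2 in `ℂ^{d₁} ⊗ ℂ^{d₂}` (Eq. (5)): index `0` is
`|00⟩ − |12⟩`; index `i` with `1 ≤ i ≤ d₁−1` is `|i0⟩ − |0i⟩`; index `j` with
`d₁ ≤ j ≤ d₂−1` is `|0j⟩ − |2,(j−1)⟩`; index `d₂` is the stopper (all-ones). -/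
noncomputable def stateD12 (d₁ d₂ : ℕ) (i : ℕ) : Matrix (Fin d₁) (Fin d₂) ℂ :=
  if i = 0 then ket d₁ d₂ 0 0 - ket d₁ d₂ 1 2
  else if i < d₁ then ket d₁ d₂ i 0 - ket d₁ d₂ 0 i
  else if i < d₂ then ket d₁ d₂ 0 i - ket d₁ d₂ 2 (i - 1)
  else fun _ _ => 1

section
variable {m n α : Type*} [Fintype m] [Fintype n] [DecidableEq m] [DecidableEq n]

theorem trace_conjTranspose_single_mul_mul_single [Semiring α] [StarRing α]
    (E : Matrix m m α) (a c : m) (b f : n) :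
    trace ((single a b (1 : α))ᴴ * (E * single c f (1 : α))) = if b = f then E a c else 0 := by
  rw [conjTranspose_single, star_one, ← Matrix.mul_assoc, single_mul_mul_single]
  split_ifs with h
  · simp [h]
  · exact trace_single_eq_of_ne _ _ _ h

theorem trace_conjTranspose_ones_mul_mul_single [Semiring α] [StarRing α]
    (E : Matrix m m α) (c : m) (f : n) :
    trace ((of fun _ _ => 1 : Matrix m n α)ᴴ * (E * single c f (1 : α))) = ∑ a, E a c := by
  simp [trace, mul_apply, single, ite_and]

theorem trace_conjTranspose_sub_single_mul_mul_sub_single [Ring α] [StarRing α]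
    (E : Matrix m m α) (a a' c c' : m) (b b' f f' : n) :
    trace ((single a b (1 : α) - single a' b' 1)ᴴ * (E * (single c f 1 - single c' f' (1 : α)))) =
      (if b = f then E a c else 0) - (if b = f' then E a c' else 0)
        - (if b' = f then E a' c else 0) + (if b' = f' then E a' c' else 0) := by
  simp only [conjTranspose_sub, Matrix.mul_sub, Matrix.sub_mul, trace_sub,
    trace_conjTranspose_single_mul_mul_single]
  abel

theorem exists_eq_smul_one_of_offDiag_eq_zero_of_colSum_eq [Semiring α] (E : Matrix m m α)
    (o : m) (h_off : ∀ a c, a ≠ c → E a c = 0) (h_sum : ∀ c, ∑ a, E a c = ∑ a, E a o) :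
    ∃ x : α, E = x • (1 : Matrix m m α) := by
  have h_colSum : ∀ c, ∑ a, E a c = E c c := fun c =>
    Finset.sum_eq_single c (fun a _ hac => h_off a c hac) (by simp)
  refine ⟨E o o, ext fun a c => ?_⟩
  rcases eq_or_ne a c with rfl | hac
  · simpa [h_colSum] using h_sum a
  · simp [h_off a c hac, hac]

end

theorem ket_eq_single (d₁ d₂ : ℕ) (a : Fin d₁) (b : Fin d₂) :
    ket d₁ d₂ a b = single a b 1 := by
  ext x y
  simp [ket, single, Fin.ext_iff, eq_comm]

section
variable {n d₂ : ℕ}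

theorem stateD12_zero_eq (hd : n + 3 ≤ d₂) :
    stateD12 (n + 3) d₂ 0 = single 0 (Fin.castLE hd 0) 1 - single 1 ⟨2, by omega⟩ 1 := by
  rw [← ket_eq_single, ← ket_eq_single]
  simp [stateD12]

theorem stateD12_eq_of_ne_zero (hd : n + 3 ≤ d₂) (i : Fin (n + 3)) (hi : i ≠ 0) :
    stateD12 (n + 3) d₂ i = single i (Fin.castLE hd 0) 1 - single 0 (Fin.castLE hd i) 1 := by
  have hi' : (i : ℕ) ≠ 0 := Fin.val_ne_zero_iff.mpr hi
  rw [stateD12, if_neg hi', if_pos i.isLt, ← ket_eq_single, ← ket_eq_single]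
  simp

theorem stateD12_self (hd : n + 3 ≤ d₂) : stateD12 (n + 3) d₂ d₂ = of fun _ _ => 1 := by
  rw [stateD12, if_neg (by omega), if_neg (by omega)]
  exact if_neg (lt_irrefl d₂)

variable (E : Matrix (Fin (n + 3)) (Fin (n + 3)) ℂ)

theorem trace_stateD12_of_ne_zero (hd : n + 3 ≤ d₂) {i k : Fin (n + 3)} (hi : i ≠ 0) (hk : k ≠ 0) (hik : i ≠ k) :
    trace ((stateD12 (n + 3) d₂ i)ᴴ * (E * stateD12 (n + 3) d₂ k)) = E i k := by
  rw [stateD12_eq_of_ne_zero hd i hi, stateD12_eq_of_ne_zero hd k hk,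
    trace_conjTranspose_sub_single_mul_mul_sub_single]
  simp [hik, hk.symm, hi]

theorem trace_stateD12_zero_left (hd : n + 3 ≤ d₂) {k : Fin (n + 3)} (hk : k ≠ 0) :
    trace ((stateD12 (n + 3) d₂ 0)ᴴ * (E * stateD12 (n + 3) d₂ k)) =
      E 0 k + if (k : ℕ) = 2 then E 1 0 else 0 := by
  rw [stateD12_zero_eq hd, stateD12_eq_of_ne_zero hd k hk,
    trace_conjTranspose_sub_single_mul_mul_sub_single]
  simp [Fin.ext_iff, Fin.val_ne_zero_iff.mpr hk, eq_comm]

theorem trace_stateD12_zero_right (hd : n + 3 ≤ d₂) {k : Fin (n + 3)} (hk : k ≠ 0) :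
    trace ((stateD12 (n + 3) d₂ k)ᴴ * (E * stateD12 (n + 3) d₂ 0)) =
      E k 0 + if (k : ℕ) = 2 then E 0 1 else 0 := by
  rw [stateD12_zero_eq hd, stateD12_eq_of_ne_zero hd k hk,
    trace_conjTranspose_sub_single_mul_mul_sub_single]
  simp [Fin.ext_iff, Fin.val_ne_zero_iff.mpr hk]

theorem trace_stateD12_self_left (hd : n + 3 ≤ d₂) {k : Fin (n + 3)} (hk : k ≠ 0) :
    trace ((stateD12 (n + 3) d₂ d₂)ᴴ * (E * stateD12 (n + 3) d₂ k)) =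
      ∑ a, E a k - ∑ a, E a 0 := by
  rw [stateD12_self hd, stateD12_eq_of_ne_zero hd k hk, Matrix.mul_sub, Matrix.mul_sub, trace_sub,
    trace_conjTranspose_ones_mul_mul_single, trace_conjTranspose_ones_mul_mul_single]

end

theorem stateD12_offDiag_eq_zero {n d₂ : ℕ} (hd : n + 3 ≤ d₂)
    (E : Matrix (Fin (n + 3)) (Fin (n + 3)) ℂ)
    (hE : ∀ i j : ℕ, i ≤ d₂ → j ≤ d₂ → i ≠ j →
      trace ((stateD12 (n + 3) d₂ i)ᴴ * (E * stateD12 (n + 3) d₂ j)) = 0)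
    (a c : Fin (n + 3)) (hac : a ≠ c) : E a c = 0 := by
  have hE' : ∀ i j : Fin (n + 3), i ≠ j →
      trace ((stateD12 (n + 3) d₂ i)ᴴ * (E * stateD12 (n + 3) d₂ j)) = 0 :=
    fun i j hij => hE i j (by omega) (by omega) (Fin.val_ne_of_ne hij)
  have hE_zero_left : ∀ k : Fin (n + 3), k ≠ 0 → E 0 k + (if (k : ℕ) = 2 then E 1 0 else 0) = 0 :=
    fun k hk => by simpa [trace_stateD12_zero_left E hd hk] using hE' 0 k hk.symm
  have hE_zero_right : ∀ k : Fin (n + 3), k ≠ 0 → E k 0 + (if (k : ℕ) = 2 then E 0 1 else 0) = 0 :=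
    fun k hk => by simpa [trace_stateD12_zero_right E hd hk] using hE' k 0 hk
  have h01 : E 0 1 = 0 := by simpa using hE_zero_left 1 one_ne_zero
  have h10 : E 1 0 = 0 := by simpa using hE_zero_right 1 one_ne_zero
  rcases eq_or_ne a 0 with rfl | ha
  · simpa [h10] using hE_zero_left c hac.symm
  rcases eq_or_ne c 0 with rfl | hc
  · simpa [h01] using hE_zero_right a ha
  simpa [trace_stateD12_of_ne_zero E hd ha hc hac] using hE' a c hac

theorem alice_trivial_d12 (d₁ d₂ : ℕ) (h1 : 3 ≤ d₁) (h2 : d₁ ≤ d₂)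
    (E : Matrix (Fin d₁) (Fin d₁) ℂ)
    (hE : ∀ i j : ℕ, i ≤ d₂ → j ≤ d₂ → i ≠ j →
      Matrix.trace ((stateD12 d₁ d₂ i)ᴴ * (E * stateD12 d₁ d₂ j)) = 0) :
    ∃ c : ℂ, E = c • (1 : Matrix (Fin d₁) (Fin d₁) ℂ) := by
  obtain ⟨n, rfl⟩ : ∃ n, d₁ = n + 3 := ⟨d₁ - 3, by omega⟩
  refine exists_eq_smul_one_of_offDiag_eq_zero_of_colSum_eq E 0
    (stateD12_offDiag_eq_zero h2 E hE) fun c => ?_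
  rcases eq_or_ne c 0 with rfl | hc
  · rfl
  have h := hE d₂ c le_rfl (by omega) (by omega)
  rwa [trace_stateD12_self_left E h2 hc, sub_eq_zero] at h
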